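/- First Main Theorem: Let (X,e) be an L-continuous lattice, equipped with its L-Scott topology σ_L(X), and define r : Φ_L(X) → X by r(u) = ⊔(u^l). Then r ∘ Φ_L r = r ∘ μ_X and r ∘ η_X = id_X; that is, (X,r) is an Eilenberg–Moore algebra of the open filter monad (Φ_L, η, μ). -/

import Mathlib

variable {L : Type*} {X : Type*} {Y : Type*}

/-- `sub(A,B) = ⨅ x, A x ⇨ B x` for `L`-subsets `A B : X → L`. -/
def subL [Order.Frame L] (A B : X → L) : L := ⨅ x, A x ⇨ B x

/-- An `L`-valued topology on `X`: a family of `L`-subsets closed under binary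
pointwise infima, arbitrary pointwise suprema, containing all constants. -/
structure IsLTopology [Order.Frame L] (𝒪 : Set (X → L)) : Prop where
  inf_mem : ∀ A B : X → L, A ∈ 𝒪 → B ∈ 𝒪 → A ⊓ B ∈ 𝒪
  sSup_mem : ∀ S : Set (X → L), S ⊆ 𝒪 → sSup S ∈ 𝒪
  const_mem : ∀ a : L, (fun _ => a : X → L) ∈ 𝒪

/-- An open filter of `(X, 𝒪)`: a map `u : 𝒪 → L` with `u (A ⊓ B) = u A ⊓ u B`
and `u (a_X) ≥ a`. -/
structure LFilter [Order.Frame L] (𝒪 : Set (X → L)) where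
  toFun : ↥𝒪 → L
  map_inf : ∀ (A B : ↥𝒪) (h : (A : X → L) ⊓ (B : X → L) ∈ 𝒪),
    toFun ⟨(A : X → L) ⊓ (B : X → L), h⟩ = toFun A ⊓ toFun B
  const_le : ∀ (a : L) (h : (fun _ => a : X → L) ∈ 𝒪), a ≤ toFun ⟨fun _ => a, h⟩

/-- `φ(A)(u) = u(A)`. -/
def phiF [Order.Frame L] (𝒪 : Set (X → L)) (A : ↥𝒪) : LFilter 𝒪 → L := fun u => u.toFun A

/-- The `L`-valued topology on `Φ_L(X)` generated by the base `{φ(A) | A ∈ 𝒪}`: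
its members are exactly the suprema `⨆_j φ(A_j) ⊓ (a_j)_const`. -/
def filtOpens [Order.Frame L] (𝒪 : Set (X → L)) : Set (LFilter 𝒪 → L) :=
  { W | ∃ S : Set (↥𝒪 × L), W = fun u => ⨆ p ∈ S, u.toFun p.1 ⊓ p.2 }

/-- The pointed filter `[x](A) = A(x)`. -/
def ptFilter [Order.Frame L] (𝒪 : Set (X → L)) (x : X) : LFilter 𝒪 where
  toFun A := (A : X → L) x
  map_inf _ _ _ := rfl
  const_le _ _ := le_rfl

/-- The filter `[S](A) = sub(S, A)` for an `L`-subset `S`. -/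
def prFilter [Order.Frame L] (𝒪 : Set (X → L)) (S : X → L) : LFilter 𝒪 where
  toFun A := subL S (A : X → L)
  map_inf A B h := by
    simp only [subL, Pi.inf_apply, himp_inf_distrib]
    exact iInf_inf_eq
  const_le a h := le_iInf fun x => le_himp_iff.2 inf_le_left

/-- `Φ_L f` for a continuous map `f`. -/
def filtMap [Order.Frame L] (𝒪X : Set (X → L)) (𝒪Y : Set (Y → L)) (f : X → Y)
    (hf : ∀ B : ↥𝒪Y, (B : Y → L) ∘ f ∈ 𝒪X) (u : LFilter 𝒪X) : LFilter 𝒪Y where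
  toFun B := u.toFun ⟨(B : Y → L) ∘ f, hf B⟩
  map_inf A B h := u.map_inf ⟨(A : Y → L) ∘ f, hf A⟩ ⟨(B : Y → L) ∘ f, hf B⟩
    (hf ⟨(A : Y → L) ⊓ (B : Y → L), h⟩)
  const_le a h := u.const_le a (hf ⟨fun _ => a, h⟩)

lemma phi_mem [Order.Frame L] (𝒪 : Set (X → L)) (A : ↥𝒪) : phiF 𝒪 A ∈ filtOpens 𝒪 := by
  refine ⟨{(A, ⊤)}, ?_⟩
  funext u
  simp [phiF]

lemma LFilter.mono [Order.Frame L] {𝒪 : Set (X → L)} (u : LFilter 𝒪) (A B : ↥𝒪)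
    (hAB : (A : X → L) ≤ (B : X → L)) : u.toFun A ≤ u.toFun B := by
  have h : (A : X → L) ⊓ (B : X → L) ∈ 𝒪 := by
    rw [inf_eq_left.2 hAB]; exact A.2
  have h2 := u.map_inf A B h
  have h3 : (⟨(A : X → L) ⊓ (B : X → L), h⟩ : ↥𝒪) = A := Subtype.ext (inf_eq_left.2 hAB)
  rw [h3] at h2
  rw [h2]
  exact inf_le_right

lemma phi_inf [Order.Frame L] (𝒪 : Set (X → L)) (A B : ↥𝒪)
    (h : (A : X → L) ⊓ (B : X → L) ∈ 𝒪) :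
    phiF 𝒪 ⟨(A : X → L) ⊓ (B : X → L), h⟩ = phiF 𝒪 A ⊓ phiF 𝒪 B := by
  funext u
  exact u.map_inf A B h

lemma const_mem_filtOpens [Order.Frame L] (𝒪 : Set (X → L)) (a : L)
    (h : (fun _ => a : X → L) ∈ 𝒪) :
    (fun _ => a : LFilter 𝒪 → L) ∈ filtOpens 𝒪 := by
  refine ⟨{(⟨fun _ => a, h⟩, a)}, ?_⟩
  funext u
  simp only [Set.mem_singleton_iff, iSup_iSup_eq_left]
  exact (inf_eq_right.2 (u.const_le a h)).symm

/-- `μ_X(α)(A) = α(φ(A))`. -/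
def muF [Order.Frame L] (𝒪 : Set (X → L)) (α : LFilter (filtOpens 𝒪)) : LFilter 𝒪 where
  toFun A := α.toFun ⟨phiF 𝒪 A, phi_mem 𝒪 A⟩
  map_inf A B h := by
    have h' : phiF 𝒪 A ⊓ phiF 𝒪 B ∈ filtOpens 𝒪 := phi_inf 𝒪 A B h ▸ phi_mem 𝒪 ⟨_, h⟩
    have h2 := α.map_inf ⟨phiF 𝒪 A, phi_mem 𝒪 A⟩ ⟨phiF 𝒪 B, phi_mem 𝒪 B⟩ h'
    have h3 : (⟨phiF 𝒪 ⟨(A : X → L) ⊓ (B : X → L), h⟩, phi_mem 𝒪 ⟨_, h⟩⟩ :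
        ↥(filtOpens 𝒪)) = ⟨phiF 𝒪 A ⊓ phiF 𝒪 B, h'⟩ := Subtype.ext (phi_inf 𝒪 A B h)
    show α.toFun ⟨phiF 𝒪 ⟨(A : X → L) ⊓ (B : X → L), h⟩, phi_mem 𝒪 ⟨_, h⟩⟩ =
      α.toFun ⟨phiF 𝒪 A, phi_mem 𝒪 A⟩ ⊓ α.toFun ⟨phiF 𝒪 B, phi_mem 𝒪 B⟩
    rw [h3]
    exact h2
  const_le a h := by
    have h1 : (fun _ => a : LFilter 𝒪 → L) ∈ filtOpens 𝒪 := const_mem_filtOpens 𝒪 a h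
    have h2 : (fun _ => a : LFilter 𝒪 → L) ≤ phiF 𝒪 ⟨fun _ => a, h⟩ :=
      fun u => u.const_le a h
    exact le_trans (α.const_le a h1) (α.mono ⟨_, h1⟩ ⟨_, phi_mem 𝒪 ⟨_, h⟩⟩ h2)

lemma filtMap_continuous [Order.Frame L] (𝒪X : Set (X → L)) (𝒪Y : Set (Y → L)) (f : X → Y)
    (hf : ∀ B : ↥𝒪Y, (B : Y → L) ∘ f ∈ 𝒪X) :
    ∀ W ∈ filtOpens 𝒪Y, (W ∘ filtMap 𝒪X 𝒪Y f hf) ∈ filtOpens 𝒪X := by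
  rintro W ⟨S, rfl⟩
  refine ⟨(fun p : ↥𝒪Y × L => ((⟨(p.1 : Y → L) ∘ f, hf p.1⟩ : ↥𝒪X), p.2)) '' S, ?_⟩
  funext u
  rw [iSup_image]
  rfl

lemma muF_continuous [Order.Frame L] (𝒪 : Set (X → L)) :
    ∀ W ∈ filtOpens 𝒪, (W ∘ muF 𝒪) ∈ filtOpens (filtOpens 𝒪) := by
  rintro W ⟨S, rfl⟩
  refine ⟨(fun p : ↥𝒪 × L =>
    ((⟨phiF 𝒪 p.1, phi_mem 𝒪 p.1⟩ : ↥(filtOpens 𝒪)), p.2)) '' S, ?_⟩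
  funext α
  rw [iSup_image]
  rfl

lemma ptFilter_continuous [Order.Frame L] (𝒪 : Set (X → L)) (h𝒪 : IsLTopology 𝒪) :
    ∀ W ∈ filtOpens 𝒪, (W ∘ ptFilter 𝒪) ∈ 𝒪 := by
  rintro W ⟨S, rfl⟩
  have key : ((fun u : LFilter 𝒪 => ⨆ p ∈ S, u.toFun p.1 ⊓ p.2) ∘ ptFilter 𝒪) =
      sSup ((fun p : ↥𝒪 × L => (p.1 : X → L) ⊓ fun _ => p.2) '' S) := by
    funext x
    rw [sSup_image', iSup_apply]
    exact (iSup_subtype'' S fun p : ↥𝒪 × L =>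
      ((p.1 : X → L) ⊓ fun _ => p.2 : X → L) x).symm
  rw [key]
  apply h𝒪.sSup_mem
  rintro g ⟨p, _, rfl⟩
  exact h𝒪.inf_mem _ _ p.1.2 (h𝒪.const_mem p.2)

/-- An `L`-order as a binary `L`-relation with the order axioms. -/
structure IsLOrder [Order.Frame L] (e : X → X → L) : Prop where
  refl : ∀ x, e x x = ⊤
  trans : ∀ x y z, e x y ⊓ e y z ≤ e x z
  antisymm : ∀ x y, e x y = ⊤ → e y x = ⊤ → x = y

/-- `s` is a supremum of the `L`-subset `A`. -/
def IsSupE [Order.Frame L] (e : X → X → L) (A : X → L) (s : X) : Prop :=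
  ∀ y, e s y = ⨅ z, A z ⇨ e z y

/-- `i` is an infimum of the `L`-subset `A`. -/
def IsInfE [Order.Frame L] (e : X → X → L) (A : X → L) (i : X) : Prop :=
  ∀ y, e y i = ⨅ z, A z ⇨ e y z

/-- Completeness: every `L`-subset has a supremum. -/
def CompleteE [Order.Frame L] (e : X → X → L) : Prop := ∀ A : X → L, ∃ s, IsSupE e A s

/-- Directedness of an `L`-subset. -/
def DirectedE [Order.Frame L] (e : X → X → L) (D : X → L) : Prop :=
  (⨆ x, D x) = ⊤ ∧ ∀ x y, D x ⊓ D y ≤ ⨆ z, D z ⊓ e x z ⊓ e y z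

/-- An ideal: a directed lower set. -/
def IsIdealE [Order.Frame L] (e : X → X → L) (I : X → L) : Prop :=
  DirectedE e I ∧ ∀ x y, I x ⊓ e y x ≤ I y

/-- `↑x(y) = e(x,y)`. -/
def upE [Order.Frame L] (e : X → X → L) (x : X) : X → L := fun y => e x y

/-- `⇓x(y) = ⨅_{I ideal} (e(x, ⊔I) ⇨ I(y))`. -/
def wbelowE [Order.Frame L] (e : X → X → L) (x y : X) : L :=
  ⨅ I : X → L, ⨅ _ : IsIdealE e I, ⨅ s : X, ⨅ _ : IsSupE e I s, e x s ⇨ I y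

/-- Scott open `L`-subsets. -/
def ScottOpenE [Order.Frame L] (e : X → X → L) (A : X → L) : Prop :=
  (∀ x y, A x ⊓ e x y ≤ A y) ∧
  ∀ D : X → L, DirectedE e D → ∀ s, IsSupE e D s → A s ≤ ⨆ x, A x ⊓ D x

/-- The `L`-Scott topology. -/
def scottOpens [Order.Frame L] (e : X → X → L) : Set (X → L) := { A | ScottOpenE e A }

/-- `u^l(x) = ⨆_{A ∈ σ_L(X)} u(A) ⊓ sub(A, ↑x)`. -/
def lowerOf [Order.Frame L] (e : X → X → L) (u : LFilter (scottOpens e)) : X → L :=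
  fun x => ⨆ A : ↥(scottOpens e), u.toFun A ⊓ subL (A : X → L) (upE e x)

/-- The specialization `L`-order `e(x,y) = ⨅_{A ∈ 𝒪} (A x ⇨ A y)`. -/
def specE [Order.Frame L] (𝒪 : Set (X → L)) (x y : X) : L :=
  ⨅ A : ↥𝒪, (A : X → L) x ⇨ (A : X → L) y

/-- `sub(u,v) = ⨅_{A ∈ 𝒪} (u A ⇨ v A)` for open filters. -/
def subF [Order.Frame L] {𝒪 : Set (X → L)} (u v : LFilter 𝒪) : L :=
  ⨅ A : ↥𝒪, u.toFun A ⇨ v.toFun A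

/-! In an `L`-continuous lattice the sets `⇑w = (y ↦ ⇓y(w))` are Scott open, by interpolation
for `⇓`. For an open filter `u` with `s = ⊔ u^l` one has `⇓s(w) ≤ u(⇑w) ≤ e(w, s)`, so `s` is
also the supremum of `w ↦ u(⇑w)`: the point `r(u)` is determined by the values of `u` on the
Scott open sets `⇑w`. This gives `r[x] = ⊔ ⇓x = x` and `A(r u) = ⨆_w u(⇑w) ⊓ A(w)` (continuity
of `r`), and reduces `r ∘ Φ_L r = r ∘ μ_X` to comparing `α(⇑w ∘ r)` with `α(φ(⇑w))`: each bounds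
the other up to a factor `⇓w(w')`, because `⇓(r u)(w) ≤ u(⇑w) ≤ e(w, r u)`. -/

section LOrder
variable [Order.Frame L] {e : X → X → L}

lemma IsSupE.le_iff {A : X → L} {s t : X} (hs : IsSupE e A s) {a : L} :
    a ≤ e s t ↔ ∀ z, a ⊓ A z ≤ e z t := by
  simp only [hs t, le_iInf_iff, le_himp_iff]

lemma IsSupE.eq_top_iff {A : X → L} {s t : X} (hs : IsSupE e A s) :
    e s t = ⊤ ↔ ∀ z, A z ≤ e z t := by
  simp only [← top_le_iff, hs.le_iff, top_inf_eq]

lemma IsSupE.le_sup (hord : IsLOrder e) {A : X → L} {s : X} (hs : IsSupE e A s) (z : X) :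
    A z ≤ e z s :=
  hs.eq_top_iff.1 (hord.refl s) z

lemma IsSupE.unique (hord : IsLOrder e) {A : X → L} {s t : X} (hs : IsSupE e A s)
    (ht : IsSupE e A t) : s = t :=
  hord.antisymm _ _ (hs.eq_top_iff.2 (ht.le_sup hord)) (ht.eq_top_iff.2 (hs.le_sup hord))

lemma IsSupE.of_le (hord : IsLOrder e) {A B : X → L} {s : X} (hB : IsSupE e B s)
    (hBA : B ≤ A) (hA : ∀ z, A z ≤ e z s) : IsSupE e A s := by
  intro y
  apply le_antisymm
  · refine le_iInf fun z => le_himp_iff.2 ?_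
    calc e s y ⊓ A z ≤ e z s ⊓ e s y := by rw [inf_comm]; exact inf_le_inf_right _ (hA z)
      _ ≤ e z y := hord.trans z s y
  · rw [hB y]
    exact iInf_mono fun z => himp_le_himp_right (hBA z)

lemma isIdealE_downE (hord : IsLOrder e) (w : X) : IsIdealE e (fun y => e y w) := by
  refine ⟨⟨eq_top_iff.2 (le_iSup_of_le w (hord.refl w).ge), fun x y => ?_⟩, fun x y => ?_⟩
  · exact le_iSup_of_le w (by simp [hord.refl])
  · rw [inf_comm]
    exact hord.trans y x w

lemma isSupE_downE (hord : IsLOrder e) (w : X) : IsSupE e (fun y => e y w) w := by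
  intro y
  apply le_antisymm
  · exact le_iInf fun z => le_himp_iff.2 (by rw [inf_comm]; exact hord.trans z w y)
  · exact (iInf_le _ w).trans (by simp [hord.refl])

lemma exists_botE (hc : CompleteE e) : ∃ b : X, ∀ y, e b y = ⊤ := by
  obtain ⟨b, hb⟩ := hc (fun _ => ⊥)
  exact ⟨b, fun y => by simpa using hb y⟩

open Classical in
lemma exists_joinE (hc : CompleteE e) (z z' : X) :
    ∃ j : X, ∀ w, e j w = e z w ⊓ e z' w := by
  obtain ⟨j, hj⟩ := hc (fun w => if w = z ∨ w = z' then (⊤ : L) else ⊥)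
  refine ⟨j, fun w => (hj w).trans (le_antisymm ?_ ?_)⟩
  · exact le_inf ((iInf_le _ z).trans (by simp)) ((iInf_le _ z').trans (by simp))
  · refine le_iInf fun v => ?_
    by_cases hv : v = z ∨ v = z'
    · rcases hv with rfl | rfl <;> simp
    · simp [hv]

lemma DirectedE.iSup_inf_le {D P Q : X → L} (hD : DirectedE e D)
    (hP : ∀ a b, P a ⊓ e a b ≤ P b) (hQ : ∀ a b, Q a ⊓ e a b ≤ Q b) :
    (⨆ a, P a ⊓ D a) ⊓ (⨆ b, Q b ⊓ D b) ≤ ⨆ c, P c ⊓ Q c ⊓ D c := by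
  simp only [iSup_inf_eq, inf_iSup_eq]
  refine iSup₂_le fun b a => ?_
  calc P a ⊓ D a ⊓ (Q b ⊓ D b) = (P a ⊓ Q b) ⊓ (D a ⊓ D b) := by ac_rfl
    _ ≤ (P a ⊓ Q b) ⊓ ⨆ c, D c ⊓ e a c ⊓ e b c := inf_le_inf_left _ (hD.2 a b)
    _ = ⨆ c, (P a ⊓ Q b) ⊓ (D c ⊓ e a c ⊓ e b c) := inf_iSup_eq _ _
    _ ≤ ⨆ c, P c ⊓ Q c ⊓ D c := iSup_mono fun c => calc
        P a ⊓ Q b ⊓ (D c ⊓ e a c ⊓ e b c) = (P a ⊓ e a c) ⊓ (Q b ⊓ e b c) ⊓ D c := by ac_rfl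
        _ ≤ P c ⊓ Q c ⊓ D c := inf_le_inf_right _ (inf_le_inf (hP a c) (hQ b c))

lemma IsIdealE.eq_top_of_bot {I : X → L} (hI : IsIdealE e I) {b : X} (hb : ∀ y, e b y = ⊤) :
    I b = ⊤ := by
  rw [eq_top_iff, ← hI.1.1]
  exact iSup_le fun w => by simpa [hb w] using hI.2 w b

lemma IsIdealE.inf_le_of_join {I : X → L} (hI : IsIdealE e I) {z z' j : X}
    (hj : ∀ w, e j w = e z w ⊓ e z' w) : I z ⊓ I z' ≤ I j :=
  (hI.1.2 z z').trans <| iSup_le fun w => by rw [inf_assoc, ← hj w]; exact hI.2 w j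

lemma isIdealE_of_inf_le_join (hord : IsLOrder e) (hc : CompleteE e) {I : X → L}
    (hlower : ∀ x y, I x ⊓ e y x ≤ I y) (hbot : ∀ b, (∀ y, e b y = ⊤) → I b = ⊤)
    (hjoin : ∀ z z' j, (∀ w, e j w = e z w ⊓ e z' w) → I z ⊓ I z' ≤ I j) :
    IsIdealE e I := by
  refine ⟨⟨?_, fun z z' => ?_⟩, hlower⟩
  · obtain ⟨b, hb⟩ := exists_botE hc
    exact eq_top_iff.2 (le_iSup_of_le b (hbot b hb).ge)
  · obtain ⟨j, hj⟩ := exists_joinE hc z z'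
    refine (hjoin z z' j hj).trans (le_iSup_of_le j ?_)
    rw [inf_assoc, ← hj j, hord.refl, inf_top_eq]

lemma isIdealE_iSup_inf {F : X → X → L} {I : X → L} (hF : ∀ w, IsIdealE e (F w))
    (hFmono : ∀ w w' y, F w y ⊓ e w w' ≤ F w' y) (hI : DirectedE e I) :
    IsIdealE e (fun y => ⨆ w, F w y ⊓ I w) := by
  refine ⟨⟨?_, fun z₁ z₂ => ?_⟩, fun y z => ?_⟩
  · rw [iSup_comm]
    simp_rw [← iSup_inf_eq, (hF _).1.1, top_inf_eq]
    exact hI.1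
  · calc (⨆ w, F w z₁ ⊓ I w) ⊓ (⨆ w, F w z₂ ⊓ I w)
        ≤ ⨆ v, F v z₁ ⊓ F v z₂ ⊓ I v :=
          hI.iSup_inf_le (fun a b => hFmono a b z₁) (fun a b => hFmono a b z₂)
      _ ≤ ⨆ v, (⨆ u, F v u ⊓ e z₁ u ⊓ e z₂ u) ⊓ I v :=
          iSup_mono fun v => inf_le_inf_right _ ((hF v).1.2 z₁ z₂)
      _ = ⨆ u, ⨆ v, F v u ⊓ e z₁ u ⊓ e z₂ u ⊓ I v := by
          simp only [iSup_inf_eq]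
          exact iSup_comm
      _ ≤ ⨆ u, (⨆ v, F v u ⊓ I v) ⊓ e z₁ u ⊓ e z₂ u := iSup_mono fun u => iSup_le fun v => calc
          F v u ⊓ e z₁ u ⊓ e z₂ u ⊓ I v = (F v u ⊓ I v) ⊓ e z₁ u ⊓ e z₂ u := by ac_rfl
          _ ≤ _ := inf_le_inf_right _ (inf_le_inf_right _ (le_iSup (fun v => F v u ⊓ I v) v))
  · simp only [iSup_inf_eq]
    refine iSup_mono fun w => ?_
    rw [inf_right_comm]
    exact inf_le_inf_right _ ((hF w).2 y z)

def lowerClosureE (e : X → X → L) (D : X → L) : X → L := fun w => ⨆ v, e w v ⊓ D v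

lemma isIdealE_lowerClosureE (hord : IsLOrder e) {D : X → L} (hD : DirectedE e D) :
    IsIdealE e (lowerClosureE e D) :=
  isIdealE_iSup_inf (isIdealE_downE hord) (fun w w' y => hord.trans y w w') hD

lemma isSupE_lowerClosureE (hord : IsLOrder e) {D : X → L} {s : X} (hs : IsSupE e D s) :
    IsSupE e (lowerClosureE e D) s :=
  hs.of_le hord (fun w => le_iSup_of_le w (by rw [hord.refl, top_inf_eq]))
    fun z => iSup_le fun v => (inf_le_inf_left _ (hs.le_sup hord v)).trans (hord.trans z v s)

end LOrder

section WayBelow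
variable [Order.Frame L] {e : X → X → L}

lemma wbelowE_le_himp {I : X → L} {s : X} (hI : IsIdealE e I) (hs : IsSupE e I s) (x y : X) :
    wbelowE e x y ≤ e x s ⇨ I y :=
  (iInf_le _ I).trans ((iInf_le _ hI).trans ((iInf_le _ s).trans (iInf_le _ hs)))

lemma wbelowE_le_of_isSupE (hord : IsLOrder e) {I : X → L} {s : X} (hI : IsIdealE e I)
    (hs : IsSupE e I s) (y : X) : wbelowE e s y ≤ I y := by
  simpa [hord.refl] using wbelowE_le_himp hI hs s y

lemma wbelowE_le (hord : IsLOrder e) (x y : X) : wbelowE e x y ≤ e y x :=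
  wbelowE_le_of_isSupE hord (isIdealE_downE hord x) (isSupE_downE hord x) y

lemma wbelowE_lower {x y z : X} : wbelowE e x y ⊓ e z y ≤ wbelowE e x z := by
  refine le_iInf fun I => le_iInf fun hI => le_iInf fun s => le_iInf fun hs => le_himp_iff.2 ?_
  calc wbelowE e x y ⊓ e z y ⊓ e x s ≤ ((e x s ⇨ I y) ⊓ e x s) ⊓ e z y := by
        rw [inf_right_comm]
        exact inf_le_inf_right _ (inf_le_inf_right _ (wbelowE_le_himp hI hs x y))
    _ ≤ I y ⊓ e z y := inf_le_inf_right _ himp_inf_le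
    _ ≤ I z := hI.2 y z

lemma wbelowE_upper (hord : IsLOrder e) {x x' y : X} :
    wbelowE e x y ⊓ e x x' ≤ wbelowE e x' y := by
  refine le_iInf fun I => le_iInf fun hI => le_iInf fun s => le_iInf fun hs => le_himp_iff.2 ?_
  calc wbelowE e x y ⊓ e x x' ⊓ e x' s ≤ (e x s ⇨ I y) ⊓ e x s := by
        rw [inf_assoc]; exact inf_le_inf (wbelowE_le_himp hI hs x y) (hord.trans x x' s)
    _ ≤ I y := himp_inf_le

lemma wbelowE_trans (hord : IsLOrder e) {x w y : X} :
    wbelowE e x w ⊓ wbelowE e w y ≤ wbelowE e x y :=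
  (inf_le_inf_left _ (wbelowE_le hord w y)).trans wbelowE_lower

lemma isIdealE_wbelowE (hord : IsLOrder e) (hc : CompleteE e) (x : X) :
    IsIdealE e (wbelowE e x) := by
  refine isIdealE_of_inf_le_join hord hc (fun y z => wbelowE_lower) (fun b hb => ?_)
    fun z z' j hj => ?_
  · exact eq_top_iff.2 <| le_iInf fun I => le_iInf fun hI => le_iInf fun s => le_iInf fun _ => by
      rw [hI.eq_top_of_bot hb, himp_top]
  · refine le_iInf fun I => le_iInf fun hI => le_iInf fun s => le_iInf fun hs => ?_
    calc wbelowE e x z ⊓ wbelowE e x z' ≤ e x s ⇨ I z ⊓ I z' := by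
          rw [himp_inf_distrib]
          exact inf_le_inf (wbelowE_le_himp hI hs x z) (wbelowE_le_himp hI hs x z')
      _ ≤ e x s ⇨ I j := himp_le_himp_left (hI.inf_le_of_join hj)

end WayBelow


section ScottOpen
variable [Order.Frame L] {e : X → X → L}

lemma const_mem_scottOpens (a : L) : (fun _ => a : X → L) ∈ scottOpens e := by
  refine ⟨fun _ _ => inf_le_left, fun D hD s _ => ?_⟩
  rw [← inf_iSup_eq, hD.1, inf_top_eq]

lemma inf_mem_scottOpens {A B : X → L} (hA : A ∈ scottOpens e) (hB : B ∈ scottOpens e) :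
    A ⊓ B ∈ scottOpens e := by
  refine ⟨fun x y => ?_, fun D hD s hs => ?_⟩
  · calc A x ⊓ B x ⊓ e x y = (A x ⊓ e x y) ⊓ (B x ⊓ e x y) := by
          rw [inf_inf_distrib_right]
      _ ≤ A y ⊓ B y := inf_le_inf (hA.1 x y) (hB.1 x y)
  · exact (inf_le_inf (hA.2 D hD s hs) (hB.2 D hD s hs)).trans (hD.iSup_inf_le hA.1 hB.1)

end ScottOpen

section OpenFilter
variable [Order.Frame L]

lemma LFilter.apply_inf_le {𝒪 : Set (X → L)} (u : LFilter 𝒪) {A B : ↥𝒪} {c : L}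
    (hconst : (fun _ => c : X → L) ∈ 𝒪) (hAc : (A : X → L) ⊓ (fun _ => c) ∈ 𝒪)
    (h : ∀ x, (A : X → L) x ⊓ c ≤ (B : X → L) x) : u.toFun A ⊓ c ≤ u.toFun B :=
  calc u.toFun A ⊓ c ≤ u.toFun A ⊓ u.toFun ⟨_, hconst⟩ := inf_le_inf_left _ (u.const_le c hconst)
    _ = u.toFun ⟨_, hAc⟩ := (u.map_inf A ⟨_, hconst⟩ hAc).symm
    _ ≤ u.toFun B := u.mono _ B h

lemma inf_const_mem_filtOpens {𝒪 : Set (X → L)} {W : LFilter 𝒪 → L}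
    (hW : W ∈ filtOpens 𝒪) (c : L) : W ⊓ (fun _ => c) ∈ filtOpens 𝒪 := by
  obtain ⟨S, rfl⟩ := hW
  refine ⟨(fun p : ↥𝒪 × L => (p.1, p.2 ⊓ c)) '' S, funext fun u => ?_⟩
  simp only [iSup_image, Pi.inf_apply, iSup_inf_eq, inf_assoc]

end OpenFilter

section LowerOf
variable [Order.Frame L] {e : X → X → L}

lemma apply_inf_subL_upE_le {A : X → L} {x y : X} : A x ⊓ subL A (upE e y) ≤ e y x :=
  (inf_le_inf_left _ (iInf_le _ x)).trans inf_himp_le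

lemma subL_upE_inf_le (hord : IsLOrder e) (A : X → L) (z z' : X) :
    subL A (upE e z) ⊓ e z' z ≤ subL A (upE e z') :=
  le_iInf fun w => le_himp_iff.2 <| calc
    subL A (upE e z) ⊓ e z' z ⊓ A w = e z' z ⊓ (A w ⊓ subL A (upE e z)) := by ac_rfl
    _ ≤ e z' z ⊓ e z w := inf_le_inf_left _ apply_inf_subL_upE_le
    _ ≤ e z' w := hord.trans z' z w

lemma subL_upE_inf_subL_upE_le {A B : X → L} {z₁ z₂ j : X}
    (hj : ∀ w, e j w = e z₁ w ⊓ e z₂ w) :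
    subL A (upE e z₁) ⊓ subL B (upE e z₂) ≤ subL (A ⊓ B) (upE e j) :=
  le_iInf fun w => by
    rw [Pi.inf_apply, upE, hj w, himp_inf_distrib]
    exact inf_le_inf ((iInf_le _ w).trans (himp_le_himp_right inf_le_left))
      ((iInf_le _ w).trans (himp_le_himp_right inf_le_right))

lemma lowerOf_lower (hord : IsLOrder e) (u : LFilter (scottOpens e)) (z z' : X) :
    lowerOf e u z ⊓ e z' z ≤ lowerOf e u z' := by
  rw [lowerOf, iSup_inf_eq]
  refine iSup_mono fun A => ?_
  rw [inf_assoc]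
  exact inf_le_inf_left _ (subL_upE_inf_le hord _ z z')

lemma le_lowerOf (u : LFilter (scottOpens e)) (A : ↥(scottOpens e)) (z : X) :
    u.toFun A ⊓ subL (A : X → L) (upE e z) ≤ lowerOf e u z :=
  le_iSup (fun A : ↥(scottOpens e) => u.toFun A ⊓ subL (A : X → L) (upE e z)) A

lemma isIdealE_lowerOf (hord : IsLOrder e) (hc : CompleteE e) (u : LFilter (scottOpens e)) :
    IsIdealE e (lowerOf e u) := by
  refine isIdealE_of_inf_le_join hord hc (lowerOf_lower hord u) (fun b hb => ?_)
    fun z z' j hj => ?_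
  · refine eq_top_iff.2 (le_trans ?_ (le_lowerOf u ⟨_, const_mem_scottOpens ⊤⟩ b))
    exact le_inf (u.const_le ⊤ _) (le_iInf fun w => by simp [upE, hb w])
  · rw [lowerOf, lowerOf, iSup_inf_eq]
    simp only [inf_iSup_eq]
    refine iSup₂_le fun A B => ?_
    have hAB : (A : X → L) ⊓ (B : X → L) ∈ scottOpens e := inf_mem_scottOpens A.2 B.2
    calc u.toFun A ⊓ subL (A : X → L) (upE e z) ⊓ (u.toFun B ⊓ subL (B : X → L) (upE e z'))
        = (u.toFun A ⊓ u.toFun B) ⊓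
            (subL (A : X → L) (upE e z) ⊓ subL (B : X → L) (upE e z')) := by ac_rfl
      _ ≤ u.toFun ⟨_, hAB⟩ ⊓ subL ((A : X → L) ⊓ (B : X → L)) (upE e j) :=
          inf_le_inf (u.map_inf A B hAB).ge (subL_upE_inf_subL_upE_le hj)
      _ ≤ lowerOf e u j := le_lowerOf u ⟨_, hAB⟩ j

end LowerOf

structure IsLContinuousLattice [Order.Frame L] (e : X → X → L) : Prop where
  isLOrder : IsLOrder e
  complete : CompleteE e
  isSupE_wbelowE : ∀ x, IsSupE e (wbelowE e x) x

def wayAboveE [Order.Frame L] (e : X → X → L) (w : X) : X → L := fun y => wbelowE e y w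

namespace IsLContinuousLattice
variable [Order.Frame L] {e : X → X → L} (hX : IsLContinuousLattice e)
include hX

theorem wbelowE_interpolate (x z : X) :
    wbelowE e x z ≤ ⨆ w, wbelowE e w z ⊓ wbelowE e x w := by
  have hord := hX.isLOrder
  set J : X → L := fun y => ⨆ w, wbelowE e w y ⊓ wbelowE e x w
  have hJ : IsIdealE e J := isIdealE_iSup_inf (isIdealE_wbelowE hord hX.complete)
    (fun _ _ _ => wbelowE_upper hord) (isIdealE_wbelowE hord hX.complete x).1
  obtain ⟨s, hs⟩ := hX.complete J
  -- `J` dominates `⇓w` for every `w ≪ x`, so `s ≥ ⊔ ⇓w = w` for those `w`, hence `s ≥ ⊔ ⇓x = x`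
  have hxs : e x s = ⊤ := (hX.isSupE_wbelowE x).eq_top_iff.2 fun w =>
    (hX.isSupE_wbelowE w).le_iff.2 fun y =>
      (show _ ≤ J y from le_iSup_of_le w (inf_comm _ _).le).trans (hs.le_sup hord y)
  simpa [hxs] using wbelowE_le_himp hJ hs x z

theorem wayAboveE_mem_scottOpens (w : X) : wayAboveE e w ∈ scottOpens e := by
  have hord := hX.isLOrder
  refine ⟨fun x y => wbelowE_upper hord, fun D hD s hs => ?_⟩
  calc wbelowE e s w ≤ ⨆ v, wbelowE e v w ⊓ wbelowE e s v := hX.wbelowE_interpolate s w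
    _ ≤ ⨆ v, wbelowE e v w ⊓ lowerClosureE e D v :=
        iSup_mono fun v => inf_le_inf_left _ <| wbelowE_le_of_isSupE hord
          (isIdealE_lowerClosureE hord hD) (isSupE_lowerClosureE hord hs) v
    _ ≤ ⨆ v, wbelowE e v w ⊓ D v := iSup_le fun v => by
        rw [lowerClosureE, inf_iSup_eq]
        refine iSup_mono fun v' => ?_
        rw [← inf_assoc]
        exact inf_le_inf_right _ (wbelowE_upper hord)

def wayAboveOpen (w : X) : ↥(scottOpens e) := ⟨wayAboveE e w, hX.wayAboveE_mem_scottOpens w⟩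

lemma subL_wayAboveE_upE (w : X) : subL (wayAboveE e w) (upE e w) = ⊤ :=
  eq_top_iff.2 <| le_iInf fun y => le_himp_iff.2 <| by
    rw [top_inf_eq]; exact wbelowE_le hX.isLOrder y w

section SupOfFilter
variable {u : LFilter (scottOpens e)} {s : X} (hs : IsSupE e (lowerOf e u) s)
include hs

theorem wbelowE_le_apply_wayAboveOpen (w : X) :
    wbelowE e s w ≤ u.toFun (hX.wayAboveOpen w) := by
  have hord := hX.isLOrder
  calc wbelowE e s w ≤ ⨆ v, wbelowE e v w ⊓ wbelowE e s v := hX.wbelowE_interpolate s w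
    _ ≤ ⨆ v, wbelowE e v w ⊓ lowerOf e u v := iSup_mono fun v => inf_le_inf_left _ <|
        wbelowE_le_of_isSupE hord (isIdealE_lowerOf hord hX.complete u) hs v
    _ ≤ u.toFun (hX.wayAboveOpen w) := iSup_le fun v => by
        rw [lowerOf, inf_iSup_eq]
        refine iSup_le fun A => ?_
        have hconst := const_mem_scottOpens (e := e) (subL (A : X → L) (upE e v) ⊓ wbelowE e v w)
        calc wbelowE e v w ⊓ (u.toFun A ⊓ subL (A : X → L) (upE e v))
            = u.toFun A ⊓ (subL (A : X → L) (upE e v) ⊓ wbelowE e v w) := by ac_rfl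
          _ ≤ u.toFun (hX.wayAboveOpen w) := u.apply_inf_le hconst (inf_mem_scottOpens A.2 hconst)
              fun y => calc
                (A : X → L) y ⊓ (subL (A : X → L) (upE e v) ⊓ wbelowE e v w)
                    ≤ wbelowE e v w ⊓ e v y := by
                      rw [← inf_assoc, inf_comm]
                      exact inf_le_inf_left _ apply_inf_subL_upE_le
                _ ≤ wbelowE e y w := wbelowE_upper hord

theorem apply_wayAboveOpen_le (w : X) : u.toFun (hX.wayAboveOpen w) ≤ e w s :=
  calc u.toFun (hX.wayAboveOpen w)
      = u.toFun (hX.wayAboveOpen w) ⊓ subL (wayAboveE e w) (upE e w) := by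
        rw [hX.subL_wayAboveE_upE, inf_top_eq]
    _ ≤ lowerOf e u w := le_lowerOf u _ w
    _ ≤ e w s := hs.le_sup hX.isLOrder w

theorem isSupE_apply_wayAboveOpen : IsSupE e (fun w => u.toFun (hX.wayAboveOpen w)) s :=
  (hX.isSupE_wbelowE s).of_le hX.isLOrder (hX.wbelowE_le_apply_wayAboveOpen hs)
    (hX.apply_wayAboveOpen_le hs)

theorem apply_eq_iSup (A : ↥(scottOpens e)) :
    (A : X → L) s = ⨆ w, u.toFun (hX.wayAboveOpen w) ⊓ (A : X → L) w := by
  apply le_antisymm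
  · calc (A : X → L) s ≤ ⨆ w, (A : X → L) w ⊓ wbelowE e s w :=
          A.2.2 _ (isIdealE_wbelowE hX.isLOrder hX.complete s).1 s (hX.isSupE_wbelowE s)
      _ ≤ _ := iSup_mono fun w => by
          rw [inf_comm]; exact inf_le_inf_right _ (hX.wbelowE_le_apply_wayAboveOpen hs w)
  · refine iSup_le fun w => ?_
    rw [inf_comm]
    exact (inf_le_inf_left _ (hX.apply_wayAboveOpen_le hs w)).trans (A.2.1 w s)

end SupOfFilter

theorem eq_top_of_apply_wayAboveOpen_le {u v : LFilter (scottOpens e)} {s t : X}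
    (hs : IsSupE e (lowerOf e u) s) (ht : IsSupE e (lowerOf e v) t)
    (h : ∀ w w', u.toFun (hX.wayAboveOpen w) ⊓ wbelowE e w w' ≤ v.toFun (hX.wayAboveOpen w')) :
    e s t = ⊤ :=
  (hX.isSupE_apply_wayAboveOpen hs).eq_top_iff.2 fun w =>
    (hX.isSupE_wbelowE w).le_iff.2 fun w' => (h w w').trans (hX.apply_wayAboveOpen_le ht w')

theorem eq_of_isSupE_lowerOf_ptFilter {x s : X}
    (hs : IsSupE e (lowerOf e (ptFilter (scottOpens e) x)) s) : s = x :=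
  (hX.isSupE_apply_wayAboveOpen hs).unique hX.isLOrder (hX.isSupE_wbelowE x)

section Algebra
variable {r : LFilter (scottOpens e) → X} (hr : ∀ u, IsSupE e (lowerOf e u) (r u))
include hr

theorem comp_mem_filtOpens (A : ↥(scottOpens e)) :
    ((A : X → L) ∘ r) ∈ filtOpens (scottOpens e) :=
  ⟨Set.range fun w => (hX.wayAboveOpen w, (A : X → L) w),
    funext fun u => by rw [iSup_range]; exact hX.apply_eq_iSup (hr u) A⟩

theorem filtMap_eq_muF
    (hrc : ∀ A : ↥(scottOpens e), ((A : X → L) ∘ r) ∈ filtOpens (scottOpens e))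
    (α : LFilter (filtOpens (scottOpens e))) :
    r (filtMap (filtOpens (scottOpens e)) (scottOpens e) r hrc α) =
      r (muF (scottOpens e) α) := by
  have hord := hX.isLOrder
  have hconst (c : L) : (fun _ => c : LFilter (scottOpens e) → L) ∈ filtOpens (scottOpens e) :=
    const_mem_filtOpens _ c (const_mem_scottOpens c)
  refine hord.antisymm _ _ (hX.eq_top_of_apply_wayAboveOpen_le (hr _) (hr _) fun w w' => ?_)
    (hX.eq_top_of_apply_wayAboveOpen_le (hr _) (hr _) fun w w' => ?_)
  · exact α.apply_inf_le (hconst _) (inf_const_mem_filtOpens (hrc (hX.wayAboveOpen w)) _) fun u =>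
      (wbelowE_trans hord).trans (hX.wbelowE_le_apply_wayAboveOpen (hr u) w')
  · exact α.apply_inf_le (hconst _) (inf_const_mem_filtOpens (phi_mem _ _) _) fun u =>
      (inf_le_inf_right _ (hX.apply_wayAboveOpen_le (hr u) w)).trans
        ((inf_comm _ _).le.trans (wbelowE_upper hord))

end Algebra

end IsLContinuousLattice

/-- First Main Theorem: For an `L`-continuous lattice `(X, e)` with its
`L`-Scott topology and `r(u) = ⊔(u^l)`, the map `r` is continuous and
`r ∘ Φ_L r = r ∘ μ_X`, `r ∘ η_X = id_X`; that is, `(X, r)` is an Eilenberg–Moore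
algebra of the open filter monad. -/
theorem stmt14 [Order.Frame L] (e : X → X → L) (hord : IsLOrder e) (hc : CompleteE e)
    (hcont : ∀ x, IsSupE e (fun y => wbelowE e x y) x)
    (r : LFilter (scottOpens e) → X) (hr : ∀ u, IsSupE e (lowerOf e u) (r u)) :
    (∀ A : ↥(scottOpens e), ((A : X → L) ∘ r) ∈ filtOpens (scottOpens e)) ∧
    (∀ x, r (ptFilter (scottOpens e) x) = x) ∧
    ∀ (hrc : ∀ A : ↥(scottOpens e), ((A : X → L) ∘ r) ∈ filtOpens (scottOpens e))
      (α : LFilter (filtOpens (scottOpens e))),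
      r (filtMap (filtOpens (scottOpens e)) (scottOpens e) r hrc α) =
        r (muF (scottOpens e) α) := by
  have hX : IsLContinuousLattice e := ⟨hord, hc, hcont⟩
  exact ⟨hX.comp_mem_filtOpens hr, fun x => hX.eq_of_isSupE_lowerOf_ptFilter (hr _),
    hX.filtMap_eq_muF hr⟩
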